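/- arXiv:1104.0399 — 2 statements merged into one kernel-verified Lean document; each statement's English description precedes it below -/
import Mathlib

section
/- Let r, s be natural numbers and let ω be the volume element of Cl(r,s). If x ∈ Cl(r,s) satisfies map f x = x for every special isometry equivalence f of Q_{r,s}, then x lies in the ℝ-linear span of 1 and ω; that is, x = c·1 + d·ω for some real numbers c, d. -/
/-!
Negating the coordinates in a set `A` is an isometry of `Q_{r,s}` of determinant `(-1)^|A|`; let
`T_A` be the induced automorphism of `Cl(r,s)`. It acts diagonally on the ordered monomials
`e_S = ∏_{i ∈ S} ι(e_i)`, by `e_S ↦ (-1)^{|S ∩ A|} e_S`, and these monomials span `Cl(r,s)` since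
left multiplication by `ι(e_i)` sends `e_S` to a multiple of `e_{S ∆ {i}}`. If `T_A x = x`, then
`x = (x + T_A x)/2`, and this averaging kills every monomial on which `T_A` acts by `-1`; doing
this for all `A` with `|A| = 2` leaves `x` in the span of the monomials fixed by all of them. For
`∅ ≠ S ≠ univ`, choosing `i ∈ S` and `j ∉ S`, the sign change at `{i, j}` acts on `e_S` by `-1`, so
only `e_∅ = 1` and `e_univ = ω` survive.
-/

open CliffordAlgebra

/-- The quadratic form `Q_{r,s}` on `ℝ^{r+s}`:
`Q(x) = -(x_0² + ⋯ + x_{r-1}²) + (x_r² + ⋯ + x_{r+s-1}²)`. -/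
noncomputable def Qrs (r s : ℕ) : QuadraticForm ℝ (Fin (r + s) → ℝ) :=
  QuadraticMap.weightedSumSquares ℝ
    (fun i : Fin (r + s) => if (i : ℕ) < r then (-1 : ℝ) else 1)

/-- The volume element `ω = ι(e_0) * ι(e_1) * ⋯ * ι(e_{r+s-1})` of `Cl(r,s)`. -/
noncomputable def volumeElt (r s : ℕ) : CliffordAlgebra (Qrs r s) :=
  (List.ofFn (fun i : Fin (r + s) => ι (Qrs r s) (Pi.single i 1))).prod

/-- An isometry equivalence of `Q_{r,s}` is special if its determinant is `1`. -/
noncomputable def IsSpecial {r s : ℕ} (f : (Qrs r s).IsometryEquiv (Qrs r s)) : Prop :=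
  LinearEquiv.det f.toLinearEquiv = 1

open Submodule

section SignEigenvectors

variable {R M : Type*} [CommRing R] [Invertible (2 : R)] [AddCommGroup M] [Module R M]

theorem Submodule.mem_span_sep_apply_eq_self {T : M →ₗ[R] M} {s : Set M}
    (hs : ∀ y ∈ s, T y = y ∨ T y = -y) {x : M} (hx : x ∈ span R s) (hTx : T x = x) :
    x ∈ span R {y ∈ s | T y = y} := by
  let avg : M →ₗ[R] M := (⅟2 : R) • (LinearMap.id + T)
  have avg_of_fixed : ∀ y, T y = y → avg y = y := fun y hy => by
    simp only [avg, LinearMap.smul_apply, LinearMap.add_apply, LinearMap.id_apply, hy,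
      ← two_smul R y, smul_smul, invOf_mul_self, one_smul]
  have : Submodule.map avg (span R s) ≤ span R {y ∈ s | T y = y} := by
    rw [map_span, span_le]
    rintro _ ⟨y, hy, rfl⟩
    rcases hs y hy with h | h
    · rw [avg_of_fixed y h]
      exact subset_span ⟨hy, h⟩
    · simp [avg, h]
  simpa only [avg_of_fixed x hTx] using this (mem_map_of_mem hx)

theorem Submodule.mem_span_sep_forall_apply_eq_self {κ : Type*} (T : κ → M →ₗ[R] M)
    (P : Finset κ) {s : Set M} (hs : ∀ p ∈ P, ∀ y ∈ s, T p y = y ∨ T p y = -y) {x : M}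
    (hx : x ∈ span R s) (hTx : ∀ p ∈ P, T p x = x) :
    x ∈ span R {y ∈ s | ∀ p ∈ P, T p y = y} := by
  classical
  induction P using Finset.induction_on with
  | empty => simpa using hx
  | insert q P _ ih =>
    simp only [Finset.forall_mem_insert] at hs hTx ⊢
    have := mem_span_sep_apply_eq_self (fun y hy => hs.1 y hy.1) (ih hs.2 hTx.2) hTx.1
    convert this using 3
    ext y
    simp only [Set.mem_sep_iff]
    tauto

end SignEigenvectors

section NegCoords

variable {R ι : Type*} [CommRing R] [DecidableEq ι]

theorem QuadraticMap.isOrtho_weightedSumSquares_single [Fintype ι] (w : ι → R) {i j : ι}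
    (h : i ≠ j) : (weightedSumSquares R w).IsOrtho (Pi.single i 1) (Pi.single j 1) := by
  rw [isOrtho_def]
  simp only [weightedSumSquares_apply, ← Finset.sum_add_distrib]
  refine Finset.sum_congr rfl fun k _ => ?_
  rcases eq_or_ne k i with rfl | hki <;> rcases eq_or_ne k j with rfl | hkj <;> simp_all

def negCoords (A : Finset ι) : (ι → R) ≃ₗ[R] (ι → R) :=
  LinearEquiv.piCongrRight fun i => if i ∈ A then LinearEquiv.neg R else LinearEquiv.refl R R

theorem negCoords_apply (A : Finset ι) (x : ι → R) (i : ι) :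
    negCoords A x i = if i ∈ A then -x i else x i := by
  simp only [negCoords, LinearEquiv.piCongrRight_apply]
  split_ifs <;> rfl

theorem negCoords_single (A : Finset ι) (i : ι) :
    negCoords A (Pi.single i (1 : R)) = (if i ∈ A then -1 else 1 : R) • Pi.single i 1 := by
  ext k
  rw [negCoords_apply]
  rcases eq_or_ne k i with rfl | hki <;> split_ifs <;> simp_all

variable [Fintype ι]

theorem det_negCoords (A : Finset ι) :
    LinearEquiv.det (negCoords A : (ι → R) ≃ₗ[R] ι → R) = (-1) ^ A.card := by
  ext
  have : ((negCoords A : (ι → R) ≃ₗ[R] ι → R) : (ι → R) →ₗ[R] ι → R) =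
      Matrix.toLin' (Matrix.diagonal fun i => if i ∈ A then -1 else 1) := by
    ext x i
    simp [negCoords_apply, Matrix.mulVec_diagonal]
  rw [LinearEquiv.coe_det, this, LinearMap.det_toLin', Matrix.det_diagonal, Finset.prod_ite_mem,
    Finset.univ_inter, Finset.prod_const, Units.val_pow_eq_pow_val, Units.val_neg, Units.val_one]

def negCoordsIsometry (w : ι → R) (A : Finset ι) :
    (QuadraticMap.weightedSumSquares R w).IsometryEquiv (QuadraticMap.weightedSumSquares R w) where
  toLinearEquiv := negCoords A
  map_app' x := by
    change QuadraticMap.weightedSumSquares R w (negCoords A x) = _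
    simp only [QuadraticMap.weightedSumSquares_apply, negCoords_apply]
    refine Finset.sum_congr rfl fun i _ => ?_
    split_ifs <;> simp

end NegCoords

namespace CliffordAlgebra

variable {R : Type*} [CommRing R] {n : ℕ}

noncomputable def gen (Q : QuadraticForm R (Fin n → R)) (i : Fin n) : CliffordAlgebra Q :=
  ι Q (Pi.single i 1)

noncomputable def monomialOn (Q : QuadraticForm R (Fin n → R)) (L : List (Fin n))
    (S : Finset (Fin n)) : CliffordAlgebra Q :=
  (L.map fun i => if i ∈ S then gen Q i else 1).prod

noncomputable def monomial (Q : QuadraticForm R (Fin n → R)) (S : Finset (Fin n)) :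
    CliffordAlgebra Q :=
  monomialOn Q (List.finRange n) S

section General

variable {Q : QuadraticForm R (Fin n → R)}

theorem monomialOn_cons (a : Fin n) (L : List (Fin n)) (S : Finset (Fin n)) :
    monomialOn Q (a :: L) S = (if a ∈ S then gen Q a else 1) * monomialOn Q L S :=
  List.prod_cons

theorem monomialOn_congr {L : List (Fin n)} {S S' : Finset (Fin n)}
    (h : ∀ k ∈ L, k ∈ S ↔ k ∈ S') : monomialOn Q L S = monomialOn Q L S' := by
  unfold monomialOn
  congr 1
  exact List.map_congr_left fun k hk => by simp only [h k hk]

theorem monomial_empty : monomial Q ∅ = 1 := by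
  simp [monomial, monomialOn]

theorem monomial_univ : monomial Q Finset.univ = (List.ofFn (gen Q)).prod := by
  simp [monomial, monomialOn, List.ofFn_eq_map]

end General

section Diagonal

open QuadraticMap

variable (w : Fin n → R)

theorem gen_mul_self (i : Fin n) :
    gen (weightedSumSquares R w) i * gen _ i = algebraMap R _ (w i) := by
  rw [gen, ι_sq_scalar, weightedSumSquares_apply]
  simp [Pi.single_apply]

theorem gen_mul_gen_comm_of_ne {i j : Fin n} (h : i ≠ j) :
    gen (weightedSumSquares R w) i * gen _ j = -(gen _ j * gen _ i) :=
  ι_mul_ι_comm_of_isOrtho (isOrtho_weightedSumSquares_single w h)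

theorem gen_mul_monomialOn {L : List (Fin n)} (hL : L.Nodup) {i : Fin n} (hi : i ∈ L)
    (S : Finset (Fin n)) :
    ∃ c : R, gen (weightedSumSquares R w) i * monomialOn _ L S =
      c • monomialOn _ L (symmDiff S {i}) := by
  induction L with
  | nil => simp at hi
  | cons a L ih =>
    obtain ⟨haL, hL⟩ := List.nodup_cons.1 hL
    simp only [monomialOn_cons, Finset.mem_symmDiff, Finset.mem_singleton]
    rcases eq_or_ne a i with rfl | hai
    · have hrest : monomialOn (weightedSumSquares R w) L (symmDiff S {a}) = monomialOn _ L S :=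
        monomialOn_congr fun k hk => by
          simp [Finset.mem_symmDiff, show k ≠ a from fun h => haL (h ▸ hk)]
      rw [hrest]
      by_cases haS : a ∈ S
      · refine ⟨w a, ?_⟩
        simp [haS, ← mul_assoc, gen_mul_self, Algebra.smul_def]
      · exact ⟨1, by simp [haS]⟩
    · obtain ⟨c, hc⟩ := ih hL ((List.mem_cons.1 hi).resolve_left hai.symm)
      by_cases haS : a ∈ S
      · refine ⟨-c, ?_⟩
        simp only [haS, hai, true_and, not_false_eq_true, if_true, true_or]
        rw [← mul_assoc, gen_mul_gen_comm_of_ne w hai.symm, neg_mul, mul_assoc, hc,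
          mul_smul_comm, neg_smul]
      · exact ⟨c, by simp [haS, hai, hc]⟩

theorem gen_mul_monomial (i : Fin n) (S : Finset (Fin n)) :
    ∃ c : R, gen (weightedSumSquares R w) i * monomial _ S = c • monomial _ (symmDiff S {i}) :=
  gen_mul_monomialOn w (List.nodup_finRange n) (List.mem_finRange i) S

theorem mem_span_range_monomial (x : CliffordAlgebra (weightedSumSquares R w)) :
    x ∈ span R (Set.range (monomial (weightedSumSquares R w))) := by
  set W := span R (Set.range (monomial (weightedSumSquares R w)))
  have gen_mul_mem : ∀ i, ∀ y ∈ W, gen _ i * y ∈ W := fun i y hy => by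
    suffices Submodule.map (LinearMap.mulLeft R (gen _ i)) W ≤ W from this (mem_map_of_mem hy)
    rw [map_span, span_le]
    rintro _ ⟨_, ⟨S, rfl⟩, rfl⟩
    obtain ⟨c, hc⟩ := gen_mul_monomial w i S
    rw [LinearMap.mulLeft_apply, hc]
    exact smul_mem _ c (subset_span ⟨_, rfl⟩)
  induction x using CliffordAlgebra.left_induction with
  | algebraMap r =>
    rw [Algebra.algebraMap_eq_smul_one, ← monomial_empty]
    exact smul_mem _ r (subset_span ⟨_, rfl⟩)
  | add _ _ hx hy => exact add_mem hx hy
  | ι_mul y m hy =>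
    rw [pi_eq_sum_univ' m, map_sum, Finset.sum_mul]
    refine sum_mem fun i _ => ?_
    rw [map_smul, smul_mul_assoc]
    exact smul_mem _ _ (gen_mul_mem i y hy)

theorem map_negCoordsIsometry_gen (A : Finset (Fin n)) (i : Fin n) :
    map (negCoordsIsometry w A).toIsometry (gen _ i) =
      (if i ∈ A then -1 else 1 : R) • gen _ i := by
  rw [gen, map_apply_ι]
  change ι _ (negCoords A (Pi.single i 1)) = _
  rw [negCoords_single, map_smul]

theorem map_negCoordsIsometry_monomialOn (A S : Finset (Fin n)) (L : List (Fin n)) :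
    map (negCoordsIsometry w A).toIsometry (monomialOn _ L S) =
      (L.map fun i => if i ∈ S ∩ A then (-1 : R) else 1).prod • monomialOn _ L S := by
  induction L with
  | nil => simp [monomialOn]
  | cons a L ih =>
    rw [monomialOn_cons, map_mul, ih, List.map_cons, List.prod_cons, mul_smul_comm, mul_smul]
    by_cases haS : a ∈ S
    · simp [haS, map_negCoordsIsometry_gen]
    · simp [haS]

theorem map_negCoordsIsometry_monomial (A S : Finset (Fin n)) :
    map (negCoordsIsometry w A).toIsometry (monomial _ S) =
      (-1 : R) ^ (S ∩ A).card • monomial _ S := by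
  rw [monomial, map_negCoordsIsometry_monomialOn, ← List.ofFn_eq_map, List.prod_ofFn,
    Finset.prod_ite_mem, Finset.univ_inter, Finset.prod_const]

theorem monomial_mem_span_one_monomial_univ [Invertible (2 : R)] {S : Finset (Fin n)}
    (hS : ∀ A : Finset (Fin n), A.card = 2 →
      map (negCoordsIsometry w A).toIsometry (monomial _ S) = monomial _ S) :
    monomial (weightedSumSquares R w) S ∈ span R {1, monomial _ Finset.univ} := by
  by_cases hempty : S = ∅
  · rw [hempty, monomial_empty]
    exact subset_span (Set.mem_insert _ _)
  by_cases huniv : S = Finset.univ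
  · rw [huniv]
    exact subset_span (Set.mem_insert_of_mem _ rfl)
  obtain ⟨i, hi⟩ := Finset.nonempty_iff_ne_empty.2 hempty
  obtain ⟨j, hj⟩ : ∃ j, j ∉ S := by simpa [Finset.eq_univ_iff_forall] using huniv
  have hij : i ≠ j := by rintro rfl; exact hj hi
  have hinter : S ∩ {i, j} = {i} := by
    rw [Finset.inter_insert_of_mem hi, Finset.inter_singleton_of_notMem hj, insert_empty_eq]
  have hneg := hS {i, j} (Finset.card_pair hij)
  rw [map_negCoordsIsometry_monomial, hinter, Finset.card_singleton, pow_one, neg_one_smul] at hneg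
  have htwo : (2 : R) • monomial (weightedSumSquares R w) S = 0 := by
    rw [two_smul]
    nth_rw 1 [← hneg]
    exact neg_add_cancel _
  rw [← one_smul R (monomial _ S), ← invOf_mul_self (2 : R), mul_smul, htwo, smul_zero]
  exact zero_mem _

theorem mem_span_one_monomial_univ_of_forall_map_negCoordsIsometry_eq [Invertible (2 : R)]
    (x : CliffordAlgebra (weightedSumSquares R w))
    (hx : ∀ A : Finset (Fin n), A.card = 2 → map (negCoordsIsometry w A).toIsometry x = x) :
    x ∈ span R {1, monomial (weightedSumSquares R w) Finset.univ} := by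
  let T (A : Finset (Fin n)) := (map (negCoordsIsometry w A).toIsometry).toLinearMap
  let pairs := Finset.powersetCard 2 (Finset.univ : Finset (Fin n))
  have hfixed : x ∈ span R {y ∈ Set.range (monomial _) | ∀ A ∈ pairs, T A y = y} := by
    refine mem_span_sep_forall_apply_eq_self T pairs ?_ (mem_span_range_monomial w x)
      fun A hA => hx A (Finset.mem_powersetCard.1 hA).2
    rintro A - _ ⟨S, rfl⟩
    simp only [T, AlgHom.toLinearMap_apply, map_negCoordsIsometry_monomial]
    rcases neg_one_pow_eq_or R (S ∩ A).card with h | h <;> simp [h]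
  refine span_le.2 ?_ hfixed
  rintro _ ⟨⟨S, rfl⟩, hS⟩
  exact monomial_mem_span_one_monomial_univ w fun A hA =>
    hS A (Finset.mem_powersetCard.2 ⟨Finset.subset_univ A, hA⟩)

end Diagonal

end CliffordAlgebra

/-- Any `SO(r,s)`-invariant element of `Cl(r,s)` lies in the span of `1` and `ω`. -/
theorem invariant_mem_span_one_volumeElt (r s : ℕ)
    (x : CliffordAlgebra (Qrs r s))
    (hx : ∀ f : (Qrs r s).IsometryEquiv (Qrs r s), IsSpecial f →
      CliffordAlgebra.map f.toIsometry x = x) :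
    ∃ c d : ℝ, x = c • (1 : CliffordAlgebra (Qrs r s)) + d • volumeElt r s := by
  have hmem := mem_span_one_monomial_univ_of_forall_map_negCoordsIsometry_eq
    (fun i : Fin (r + s) => if (i : ℕ) < r then (-1 : ℝ) else 1) x fun A hA => by
      refine hx (negCoordsIsometry _ A) ?_
      change LinearEquiv.det (negCoords A : (Fin (r + s) → ℝ) ≃ₗ[ℝ] _) = 1
      rw [det_negCoords, hA, neg_one_sq]
  rw [monomial_univ] at hmem
  obtain ⟨c, d, hcd⟩ := mem_span_pair.1 hmem
  exact ⟨c, d, hcd.symm⟩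
end

section
/- Let r, s be natural numbers with r + s ≥ 1 and let ω be the volume element of Cl(r,s). If c, d are real numbers such that (c·1 + d·ω)² = -1 in Cl(r,s), then c = 0, d = 1 or d = -1, and ω² = -1. -/
open CliffordAlgebra

/-!
Distinct basis vectors of `Cl(r,s)` anticommute and square to `±1`, hence `ω² = ±1`. Negating one
coordinate is an isometry of `Q_{r,s}`; the induced algebra automorphism of `Cl(r,s)` fixes the
scalars and sends `ω` to `-ω`, so `1` and `ω` are linearly independent once `r + s ≥ 1`.
Comparing coefficients in `(c + dω)² = (c² + d²ω²) + 2cd ω = -1` leaves only `ω² = -1`, `c = 0`,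
`d² = 1`.
-/

section AnticommutingProducts

variable {A : Type*} [Ring A]

theorem List.prod_mul_eq_neg_one_pow_mul {x : A} {l : List A}
    (h : ∀ y ∈ l, y * x = -(x * y)) : l.prod * x = (-1) ^ l.length * (x * l.prod) := by
  induction l with
  | nil => simp
  | cons a t ih =>
    rw [List.forall_mem_cons] at h
    calc (a :: t).prod * x = a * (t.prod * x) := by rw [List.prod_cons, mul_assoc]
      _ = (-1) ^ t.length * (a * x * t.prod) := by
          rw [ih h.2, ← mul_assoc, ((Commute.neg_one_right a).pow_right _).eq, mul_assoc,
            mul_assoc]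
      _ = (-1) ^ (a :: t).length * (x * (a :: t).prod) := by
          rw [h.1, List.length_cons, pow_succ, List.prod_cons]; noncomm_ring

theorem List.exists_prod_mul_self_eq_neg_one_pow {l : List A}
    (hl : l.Pairwise fun x y => x * y = -(y * x)) (hsq : ∀ x ∈ l, ∃ k : ℕ, x * x = (-1) ^ k) :
    ∃ k : ℕ, l.prod * l.prod = (-1) ^ k := by
  induction l with
  | nil => exact ⟨0, by simp⟩
  | cons a t ih =>
    rw [List.pairwise_cons] at hl
    rw [List.forall_mem_cons] at hsq
    obtain ⟨i, hi⟩ := hsq.1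
    obtain ⟨j, hj⟩ := ih hl.2 hsq.2
    have hta := List.prod_mul_eq_neg_one_pow_mul (x := a) fun y hy => by rw [hl.1 y hy, neg_neg]
    refine ⟨t.length + i + j, ?_⟩
    calc (a :: t).prod * (a :: t).prod = a * (t.prod * a) * t.prod := by
          simp only [List.prod_cons, mul_assoc]
      _ = (-1) ^ t.length * (a * a) * (t.prod * t.prod) := by
          rw [hta, ← mul_assoc, ((Commute.neg_one_right a).pow_right _).eq]
          simp only [mul_assoc]
      _ = (-1) ^ (t.length + i + j) := by rw [hi, hj, pow_add, pow_add]

end AnticommutingProducts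

theorem List.prod_ofFn_smul {R A : Type*} [CommSemiring R] [Semiring A] [Algebra R A] {n : ℕ}
    (c : Fin n → R) (f : Fin n → A) :
    (List.ofFn fun i => c i • f i).prod = (∏ i, c i) • (List.ofFn f).prod := by
  induction n with
  | zero => simp
  | succ n ih =>
    rw [List.ofFn_succ, List.prod_cons, ih, List.ofFn_succ, List.prod_cons, Fin.prod_univ_succ,
      smul_mul_smul_comm, mul_smul]

theorem linearIndependent_one_of_algHom_apply_eq_neg {K A : Type*} [Field K] [CharZero K] [Ring A]
    [Algebra K A] [Nontrivial A] (φ : A →ₐ[K] A) {x : A} (hx : x ≠ 0) (hφ : φ x = -x) :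
    LinearIndependent K ![1, x] := by
  refine LinearIndependent.pair_iff.mpr fun a b h => ?_
  have h' : a • 1 - b • x = 0 := by simpa [hφ, sub_eq_add_neg] using congrArg φ h
  have hb : (2 * b) • x = 0 := by linear_combination (norm := module) h - h'
  obtain rfl : b = 0 := by simpa [hx] using hb
  simpa using h

namespace QuadraticMap

variable {ι R : Type*} [Fintype ι] [CommRing R]

theorem weightedSumSquares_mul_left (w : ι → R) {ε : ι → R} (hε : ∀ i, ε i * ε i = 1)
    (x : ι → R) : weightedSumSquares R w (ε * x) = weightedSumSquares R w x := by
  simp only [weightedSumSquares_apply]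
  exact Finset.sum_congr rfl fun i _ => by rw [Pi.mul_apply, mul_mul_mul_comm, hε, one_mul]

variable [DecidableEq ι]

theorem weightedSumSquares_single (w : ι → R) (i : ι) :
    weightedSumSquares R w (Pi.single i 1) = w i := by
  simp [weightedSumSquares_apply, Pi.single_apply]

theorem isOrtho_weightedSumSquares_single_s7 (w : ι → R) {i j : ι} (hij : i ≠ j) :
    (weightedSumSquares R w).IsOrtho (Pi.single i 1) (Pi.single j 1) := by
  rw [isOrtho_def, weightedSumSquares_single, weightedSumSquares_single,
    weightedSumSquares_apply, Finset.sum_eq_add (s := Finset.univ) i j hij]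
  · simp [hij, hij.symm]
  · intro k _ hk; simp [hk.1, hk.2]
  all_goals simp

end QuadraticMap

namespace Qrs

variable {r s : ℕ}

theorem ι_single_mul_ι_single_comm {i j : Fin (r + s)} (hij : i ≠ j) :
    ι (Qrs r s) (Pi.single i 1) * ι (Qrs r s) (Pi.single j 1)
      = -(ι (Qrs r s) (Pi.single j 1) * ι (Qrs r s) (Pi.single i 1)) :=
  ι_mul_ι_comm_of_isOrtho (QuadraticMap.isOrtho_weightedSumSquares_single_s7 _ hij)

theorem exists_ι_single_mul_self (i : Fin (r + s)) :
    ∃ k : ℕ, ι (Qrs r s) (Pi.single i 1) * ι (Qrs r s) (Pi.single i 1) = (-1) ^ k := by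
  rw [ι_sq_scalar, Qrs, QuadraticMap.weightedSumSquares_single]
  split_ifs
  exacts [⟨1, by simp⟩, ⟨0, by simp⟩]

def signChange (ε : Fin (r + s) → ℝ) (hε : ∀ i, ε i * ε i = 1) : Qrs r s →qᵢ Qrs r s where
  toLinearMap := LinearMap.mulLeft ℝ ε
  map_app' := QuadraticMap.weightedSumSquares_mul_left _ hε

@[simp]
theorem signChange_apply (ε : Fin (r + s) → ℝ) (hε : ∀ i, ε i * ε i = 1) (x : Fin (r + s) → ℝ) :
    signChange ε hε x = ε * x :=
  rfl

end Qrs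

theorem exists_volumeElt_mul_self (r s : ℕ) :
    ∃ k : ℕ, volumeElt r s * volumeElt r s = (-1) ^ k := by
  refine List.exists_prod_mul_self_eq_neg_one_pow ?_ ?_
  · exact List.pairwise_ofFn.mpr fun i j hij => Qrs.ι_single_mul_ι_single_comm hij.ne
  · simpa using Qrs.exists_ι_single_mul_self

theorem map_signChange_volumeElt {r s : ℕ} (ε : Fin (r + s) → ℝ) (hε : ∀ i, ε i * ε i = 1) :
    CliffordAlgebra.map (Qrs.signChange ε hε) (volumeElt r s) = (∏ i, ε i) • volumeElt r s := by
  have hι (i : Fin (r + s)) :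
      CliffordAlgebra.map (Qrs.signChange ε hε) (ι (Qrs r s) (Pi.single i 1))
        = ε i • ι (Qrs r s) (Pi.single i 1) := by
    rw [map_apply_ι, Qrs.signChange_apply, ← map_smul]
    congr 1
    ext j
    rcases eq_or_ne j i with rfl | hj <;> simp [*]
  rw [volumeElt, map_list_prod, List.map_ofFn]
  simp only [Function.comp_def, hι]
  exact List.prod_ofFn_smul ε _

theorem linearIndependent_one_volumeElt {r s : ℕ} (hrs : 1 ≤ r + s) :
    LinearIndependent ℝ ![1, volumeElt r s] := by
  let i₀ : Fin (r + s) := ⟨0, hrs⟩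
  have hε (i : Fin (r + s)) : (if i = i₀ then -1 else 1 : ℝ) * (if i = i₀ then -1 else 1) = 1 := by
    split_ifs <;> norm_num
  obtain ⟨k, hk⟩ := exists_volumeElt_mul_self r s
  refine linearIndependent_one_of_algHom_apply_eq_neg
    (CliffordAlgebra.map (Qrs.signChange _ hε)) ?_ ?_
  · intro h
    rw [h, zero_mul] at hk
    exact (isUnit_neg_one.pow k).ne_zero hk.symm
  · simp [map_signChange_volumeElt]

/-- If `(c·1 + d·ω)² = -1` in `Cl(r,s)` with `r + s ≥ 1`, then `c = 0`,
`d = ±1`, and `ω² = -1`. -/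
theorem sq_eq_neg_one_of_span (r s : ℕ) (hrs : 1 ≤ r + s) (c d : ℝ)
    (h : (c • (1 : CliffordAlgebra (Qrs r s)) + d • volumeElt r s) ^ 2 = -1) :
    c = 0 ∧ (d = 1 ∨ d = -1) ∧ volumeElt r s ^ 2 = -1 := by
  set ω := volumeElt r s
  obtain ⟨k, hk⟩ := exists_volumeElt_mul_self r s
  have hω : ω * ω = ((-1 : ℝ) ^ k) • 1 := by
    rw [hk, ← Algebra.algebraMap_eq_smul_one, map_pow, map_neg, map_one]
  have hsq : (c • (1 : CliffordAlgebra (Qrs r s)) + d • ω) ^ 2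
      = (c ^ 2 + d ^ 2 * (-1) ^ k) • 1 + (2 * c * d) • ω := by
    rw [pow_two]
    simp only [add_mul, mul_add, smul_mul_smul_comm, one_mul, mul_one, hω]
    module
  obtain ⟨hscalar, hcd⟩ : c ^ 2 + d ^ 2 * (-1) ^ k + 1 = 0 ∧ 2 * c * d = 0 := by
    refine LinearIndependent.pair_iff.mp (linearIndependent_one_volumeElt hrs) _ _ ?_
    rw [hsq] at h
    linear_combination (norm := module) h
  rcases neg_one_pow_eq_or ℝ k with hsign | hsign <;> rw [hsign] at hscalar
  · nlinarith [sq_nonneg c, sq_nonneg d]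
  · obtain rfl : c = 0 := by
      rcases mul_eq_zero.mp hcd with hc | rfl
      · linarith
      · nlinarith [sq_nonneg c]
    refine ⟨rfl, sq_eq_one_iff.mp (by linarith), ?_⟩
    rw [pow_two, hω, hsign, neg_one_smul]
end
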